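/- Let Z_1, ..., Z_{n+1} be exchangeable, almost surely distinct real random variables, and let Q be the ⌈(1-α)(n+1)⌉-th order statistic of Z_1, ..., Z_n with ⌈(1-α)(n+1)⌉ ≤ n. Then P(Z_{n+1} ≤ Q) ≤ (⌈(1-α)(n+1)⌉)/(n+1), so the conformal coverage also satisfies the upper bound 1 - α ≤ P(Z_{n+1} ≤ Q) ≤ 1 - α + 1/(n+1). -/

import Mathlib

open MeasureTheory
open scoped ENNReal

/-- `orderStat l k` is the k-th smallest element of the list `l` (1-indexed). -/
noncomputable def orderStat (l : List ℝ) (k : ℕ) : ℝ :=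
  (l.mergeSort (fun a b => decide (a ≤ b))).getD (k - 1) 0

/-- Exchangeability: the joint law is invariant under permutations of the indices. -/
def Exchangeable {Ω α ι : Type*} [MeasurableSpace Ω] [MeasurableSpace α]
    (P : Measure Ω) (Z : ι → Ω → α) : Prop :=
  ∀ σ : Equiv.Perm ι,
    Measure.map (fun ω i => Z (σ i) ω) P = Measure.map (fun ω i => Z i ω) P

section aux
open Finset

lemma le_orderStat_iff (l : List ℝ) (a : ℝ) (k : ℕ) (hk1 : 1 ≤ k) (hk2 : k ≤ l.length) :
    a ≤ orderStat l k ↔ l.countP (fun x => decide (x < a)) < k := by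
  set s := l.mergeSort (fun a b => decide (a ≤ b)) with hs
  have hperm : s.Perm l := List.mergeSort_perm l _
  have hlen : s.length = l.length := hperm.length_eq
  have hsort : s.Pairwise (· ≤ ·) := by
    have := List.pairwise_mergeSort (le := fun a b : ℝ => decide (a ≤ b))
      (fun a b c hab hbc => by simp_all; linarith)
      (fun a b => by simp [le_total]) l
    exact this.imp (fun h => by simpa using h)
  have hkl : k - 1 < s.length := by omega
  have hQ : orderStat l k = s[k-1] := List.getD_eq_getElem _ _ hkl
  rw [← hperm.countP_eq, hQ]
  constructor
  · intro h
    by_contra hc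
    push_neg at hc
    have hsplit : s.countP (fun x => decide (x < a)) =
        (s.take (k-1)).countP (fun x => decide (x < a)) +
        (s.drop (k-1)).countP (fun x => decide (x < a)) := by
      rw [← List.countP_append, List.take_append_drop]
    have hdrop : (s.drop (k-1)).countP (fun x => decide (x < a)) = 0 := by
      rw [List.countP_eq_zero]
      intro x hx
      simp only [decide_eq_true_eq, not_lt]
      rw [List.drop_eq_getElem_cons hkl] at hx
      rcases List.mem_cons.1 hx with rfl | hx
      · exact h
      · refine le_trans h ?_
        have hsd : (s.drop (k-1)).Pairwise (· ≤ ·) := hsort.drop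
        rw [List.drop_eq_getElem_cons hkl, List.pairwise_cons] at hsd
        exact hsd.1 x hx
    have htake : (s.take (k-1)).countP (fun x => decide (x < a)) ≤ k - 1 :=
      le_trans List.countP_le_length (by simp)
    omega
  · intro h
    by_contra hc
    push_neg at hc
    have htake : (s.take k).countP (fun x => decide (x < a)) = k := by
      have hlk : (s.take k).length = k := by simp; omega
      rw [List.countP_eq_length.2, hlk]
      intro x hx
      simp only [decide_eq_true_eq]
      rw [List.mem_take_iff_getElem] at hx
      obtain ⟨i, hi, rfl⟩ := hx
      have : s[i] ≤ s[k-1] := by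
        have := hsort.rel_get_of_le (a := ⟨i, by omega⟩) (b := ⟨k-1, hkl⟩)
          (by simp [Fin.le_def]; omega)
        simpa using this
      exact lt_of_le_of_lt this hc
    have : k ≤ s.countP (fun x => decide (x < a)) := by
      calc k = (s.take k).countP (fun x => decide (x < a)) := htake.symm
        _ ≤ (s.take k).countP _ + (s.drop k).countP (fun x => decide (x < a)) :=
            Nat.le_add_right _ _
        _ = s.countP (fun x => decide (x < a)) := by
            rw [← List.countP_append, List.take_append_drop]
    omega

lemma rank_lt (m : ℕ) (z : Fin m → ℝ) (i : Fin m) :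
    (univ.filter (fun j => z j < z i)).card < m := by
  have h : univ.filter (fun j => z j < z i) ⊂ univ := by
    rw [Finset.ssubset_univ_iff]
    intro h
    have : i ∈ univ.filter (fun j => z j < z i) := by rw [h]; exact mem_univ i
    simp at this
  simpa using Finset.card_lt_card h

lemma rank_inj {m : ℕ} {z : Fin m → ℝ} (hz : Function.Injective z) :
    Function.Injective (fun i => (univ.filter (fun j => z j < z i)).card) := by
  have key : ∀ i i' : Fin m, z i < z i' →
      (univ.filter (fun j => z j < z i)).card < (univ.filter (fun j => z j < z i')).card := by
    intro i i' h
    apply Finset.card_lt_card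
    constructor
    · intro j hj
      simp only [mem_filter, mem_univ, true_and] at hj ⊢
      exact hj.trans h
    · intro hsub
      have : i ∈ univ.filter (fun j => z j < z i') := by simp [h]
      have := hsub this
      simp at this
  intro i i' h
  by_contra hne
  rcases lt_or_gt_of_ne (fun he => hne (hz he)) with hlt | hlt
  · exact absurd h (Nat.ne_of_lt (key _ _ hlt))
  · exact absurd h.symm (Nat.ne_of_lt (key _ _ hlt))

lemma card_rank_lt {m : ℕ} (z : Fin m → ℝ) (hz : Function.Injective z) (k : ℕ) (hk : k ≤ m) :
    (univ.filter (fun i : Fin m => (univ.filter (fun j => z j < z i)).card < k)).card = k := by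
  set e : Fin m → Fin m := fun i => ⟨_, rank_lt m z i⟩ with he
  have hei : Function.Injective e := by
    intro a b hab
    exact rank_inj hz (congrArg Fin.val hab)
  have hes : Function.Surjective e := Finite.surjective_of_injective hei
  have h1 : (univ.filter (fun i : Fin m => (univ.filter (fun j => z j < z i)).card < k)).card
      = (univ.filter (fun v : Fin m => (v : ℕ) < k)).card := by
    apply Finset.card_bij (fun i _ => e i)
    · intro a ha; simp only [mem_filter, mem_univ, true_and] at ha ⊢; exact ha
    · intro a _ b _ hab; exact hei hab
    · intro v hv
      obtain ⟨i, rfl⟩ := hes v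
      simp only [mem_filter, mem_univ, true_and] at hv ⊢
      exact ⟨i, hv, rfl⟩
  have h2 : (univ.filter (fun v : Fin m => (v : ℕ) < k)).card = k := by
    rw [← Finset.card_range k]
    apply Finset.card_bij (fun (v : Fin m) _ => (v : ℕ))
    · intro a ha; simp only [mem_filter, mem_univ, true_and] at ha; simpa using ha
    · intro a _ b _ hab; exact Fin.val_injective hab
    · intro v hv
      simp only [Finset.mem_range] at hv
      exact ⟨⟨v, lt_of_lt_of_le hv hk⟩, by simp [hv], rfl⟩
  rw [h1, h2]

lemma countP_ofFn {m : ℕ} (f : Fin m → ℝ) (p : ℝ → Bool) :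
    (List.ofFn f).countP p = (univ.filter (fun i => p (f i) = true)).card := by
  classical
  rw [Finset.card_filter]
  induction m with
  | zero => simp
  | succ m ih =>
    rw [List.ofFn_succ, List.countP_cons, Fin.sum_univ_succ, ih (fun i => f i.succ)]
    simp [add_comm]

end aux

/-- two-sided conformal coverage bound.  For exchangeable, a.s. distinct
Z_1, ..., Z_{n+1}, with Q the ⌈(1-α)(n+1)⌉-th order statistic of Z_1, ..., Z_n and
⌈(1-α)(n+1)⌉ ≤ n, we have P(Z_{n+1} ≤ Q) ≤ ⌈(1-α)(n+1)⌉/(n+1), and hence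
1 - α ≤ P(Z_{n+1} ≤ Q) ≤ 1 - α + 1/(n+1). -/
theorem stmt_10 {Ω : Type*} [MeasurableSpace Ω] (P : Measure Ω) [IsProbabilityMeasure P]
    (n : ℕ) (Z : Fin (n + 1) → Ω → ℝ) (hZ : ∀ i, Measurable (Z i))
    (hexch : Exchangeable P Z)
    (hdist : ∀ i j, i ≠ j → P {ω | Z i ω = Z j ω} = 0)
    (α : ℝ) (hα : α ∈ Set.Ioo (0:ℝ) 1) (hk : ⌈(1 - α) * (n + 1)⌉₊ ≤ n) :
    (P {ω | Z (Fin.last n) ω ≤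
        orderStat (List.ofFn fun i : Fin n => Z i.castSucc ω)
          ⌈(1 - α) * (n + 1)⌉₊}).toReal ≤ (⌈(1 - α) * (n + 1)⌉₊ : ℝ) / (n + 1) ∧
    1 - α ≤ (P {ω | Z (Fin.last n) ω ≤
        orderStat (List.ofFn fun i : Fin n => Z i.castSucc ω)
          ⌈(1 - α) * (n + 1)⌉₊}).toReal ∧
    (P {ω | Z (Fin.last n) ω ≤
        orderStat (List.ofFn fun i : Fin n => Z i.castSucc ω)
          ⌈(1 - α) * (n + 1)⌉₊}).toReal ≤ 1 - α + 1 / (n + 1) := by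
  classical
  obtain ⟨hα0, hα1⟩ := hα
  set k : ℕ := ⌈(1 - α) * (n + 1)⌉₊ with hkdef
  have hxpos : (0:ℝ) < (1 - α) * (n + 1) := by
    have h1 : (0:ℝ) < 1 - α := by linarith
    have h2 : (0:ℝ) < (n:ℝ) + 1 := by positivity
    exact mul_pos h1 h2
  have hk1 : 1 ≤ k := Nat.ceil_pos.mpr hxpos
  have hklow : (1 - α) * (n + 1) ≤ (k : ℝ) := Nat.le_ceil _
  have hkhigh : (k : ℝ) < (1 - α) * (n + 1) + 1 := Nat.ceil_lt_add_one hxpos.le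
  -- the rank events
  set B : Fin (n+1) → Set Ω :=
    fun i => {ω | ((Finset.univ.filter (fun j => Z j ω < Z i ω)).card : ℕ) < k} with hBdef
  have hBm : ∀ i, MeasurableSet (B i) := by
    intro i
    have hc : Measurable (fun ω => ((Finset.univ.filter (fun j => Z j ω < Z i ω)).card : ℕ)) := by
      simp_rw [Finset.card_filter]
      apply Finset.measurable_sum
      intro j _
      exact Measurable.ite (measurableSet_lt (hZ j) (hZ i)) measurable_const measurable_const
    exact hc ((Set.to_countable (Set.Iio k)).measurableSet)
  -- the target event equals B (Fin.last n)
  have hTeq : {ω | Z (Fin.last n) ω ≤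
      orderStat (List.ofFn fun i : Fin n => Z i.castSucc ω) k} = B (Fin.last n) := by
    ext ω
    have hlen : (List.ofFn fun i : Fin n => Z i.castSucc ω).length = n := by simp
    rw [Set.mem_setOf_eq, le_orderStat_iff _ _ k hk1 (by rw [hlen]; exact hk)]
    rw [countP_ofFn]
    have hcard : (Finset.univ.filter
          (fun i : Fin n => decide (Z i.castSucc ω < Z (Fin.last n) ω) = true)).card
        = (Finset.univ.filter (fun j : Fin (n+1) => Z j ω < Z (Fin.last n) ω)).card := by
      rw [Finset.card_filter, Finset.card_filter, Fin.sum_univ_castSucc]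
      simp
    rw [hcard]
    rfl
  -- all B i have the same measure, via exchangeability
  have hS : MeasurableSet {z : Fin (n+1) → ℝ |
      ((Finset.univ.filter (fun j => z j < z (Fin.last n))).card : ℕ) < k} := by
    have hc : Measurable (fun z : Fin (n+1) → ℝ =>
        ((Finset.univ.filter (fun j => z j < z (Fin.last n))).card : ℕ)) := by
      simp_rw [Finset.card_filter]
      apply Finset.measurable_sum
      intro j _
      exact Measurable.ite
        (measurableSet_lt (measurable_pi_apply j) (measurable_pi_apply (Fin.last n)))
        measurable_const measurable_const
    exact hc ((Set.to_countable (Set.Iio k)).measurableSet)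
  have hjoint : Measurable (fun ω => fun j => Z j ω) := measurable_pi_lambda _ hZ
  have hmapeq : ∀ i, P (B i) = P (B (Fin.last n)) := by
    intro i
    set σ : Equiv.Perm (Fin (n+1)) := Equiv.swap i (Fin.last n) with hσ
    have hpm : Measurable (fun ω => fun j => Z (σ j) ω) :=
      measurable_pi_lambda _ (fun j => hZ _)
    have h1 := congrArg (fun μ => μ {z : Fin (n+1) → ℝ |
      ((Finset.univ.filter (fun j => z j < z (Fin.last n))).card : ℕ) < k}) (hexch σ)
    simp only [Measure.map_apply hpm hS, Measure.map_apply hjoint hS] at h1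
    have h2 : (fun ω => fun j => Z (σ j) ω) ⁻¹' {z : Fin (n+1) → ℝ |
        ((Finset.univ.filter (fun j => z j < z (Fin.last n))).card : ℕ) < k} = B i := by
      ext ω
      have hσlast : Z (σ (Fin.last n)) ω = Z i ω := by
        rw [Equiv.swap_apply_right]
      simp only [Set.mem_preimage, Set.mem_setOf_eq, hBdef, hσlast]
      have : (Finset.univ.filter (fun j => Z (σ j) ω < Z i ω)).card
          = (Finset.univ.filter (fun j => Z j ω < Z i ω)).card := by
        apply Finset.card_bij (fun j _ => σ j)
        · intro a ha
          simp only [Finset.mem_filter, Finset.mem_univ, true_and] at ha ⊢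
          exact ha
        · intro a _ b _ hab; exact σ.injective hab
        · intro b hb
          simp only [Finset.mem_filter, Finset.mem_univ, true_and] at hb ⊢
          exact ⟨σ⁻¹ b, by simpa using hb, by simp⟩
      rw [this]
    have h3 : (fun ω => fun j => Z j ω) ⁻¹' {z : Fin (n+1) → ℝ |
        ((Finset.univ.filter (fun j => z j < z (Fin.last n))).card : ℕ) < k}
        = B (Fin.last n) := rfl
    rw [h2, h3] at h1
    exact h1
  -- almost-sure injectivity
  have hae : ∀ᵐ ω ∂P, Function.Injective (fun j => Z j ω) := by
    have hbad : P (⋃ (i : Fin (n+1)) (j : Fin (n+1)) (_ : i ≠ j), {ω | Z i ω = Z j ω}) = 0 := by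
      refine measure_iUnion_null fun i => measure_iUnion_null fun j => measure_iUnion_null ?_
      intro hij
      exact hdist i j hij
    rw [ae_iff]
    refine measure_mono_null ?_ hbad
    intro ω hω
    simp only [Set.mem_setOf_eq, Function.Injective] at hω
    push_neg at hω
    obtain ⟨a, b, hab, hne⟩ := hω
    exact Set.mem_iUnion.2 ⟨a, Set.mem_iUnion.2 ⟨b, Set.mem_iUnion.2 ⟨hne, hab⟩⟩⟩
  -- sum of the measures equals k
  have hsum : ∑ i : Fin (n+1), P (B i) = (k : ℝ≥0∞) := by
    have e1 : ∀ i, P (B i) = ∫⁻ ω, (B i).indicator 1 ω ∂P := by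
      intro i; rw [lintegral_indicator_one (hBm i)]
    simp_rw [e1]
    rw [← lintegral_finset_sum _ (fun i _ => measurable_one.indicator (hBm i))]
    have e2 : ∫⁻ ω, ∑ i : Fin (n+1), (B i).indicator 1 ω ∂P = ∫⁻ x, (k : ℝ≥0∞) ∂P := by
      apply lintegral_congr_ae
      filter_upwards [hae] with ω hω
      have : ∑ i : Fin (n+1), (B i).indicator (1 : Ω → ℝ≥0∞) ω
          = ((Finset.univ.filter (fun i : Fin (n+1) => ω ∈ B i)).card : ℝ≥0∞) := by
        simp_rw [Set.indicator_apply, Pi.one_apply]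
        rw [Finset.sum_boole]
      rw [this]
      norm_cast
      simpa [hBdef] using card_rank_lt (fun j => Z j ω) hω k (by omega)
    rw [e2, lintegral_const, measure_univ, mul_one]
  have hconst : ∑ i : Fin (n+1), P (B i) = (n + 1 : ℕ) * P (B (Fin.last n)) := by
    rw [Finset.sum_congr rfl (fun i _ => hmapeq i), Finset.sum_const]
    simp [Finset.card_univ, nsmul_eq_mul]
  have hkey : ((n:ℝ≥0∞) + 1) * P (B (Fin.last n)) = (k : ℝ≥0∞) := by
    rw [← hsum, hconst]; push_cast; ring_nf
  -- convert to reals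
  have hfin : P (B (Fin.last n)) ≠ ⊤ := measure_ne_top P _
  have hreal : (P (B (Fin.last n))).toReal = (k : ℝ) / (n + 1) := by
    have := congrArg ENNReal.toReal hkey
    rw [ENNReal.toReal_mul] at this
    simp only [ENNReal.toReal_natCast] at this
    have h1 : ((n:ℝ≥0∞) + 1).toReal = (n:ℝ) + 1 := by
      rw [ENNReal.toReal_add (by simp) (by simp)]; simp
    rw [h1] at this
    field_simp
    linarith [this]
  rw [hTeq, hreal]
  have hn1 : (0:ℝ) < (n:ℝ) + 1 := by positivity
  refine ⟨le_refl _, ?_, ?_⟩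
  · rw [le_div_iff₀ hn1]
    exact hklow
  · rw [div_le_iff₀ hn1]
    have : (1 - α + 1 / (n + 1)) * ((n:ℝ) + 1) = (1-α)*(n+1) + 1 := by field_simp
    rw [this]
    linarith
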